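/- arXiv:2106.00384 — 7 statements merged into one kernel-verified Lean document; each statement's English description precedes it below -/
import Mathlib

section
/- In the classic SIR model, solutions starting in the domain D = {(s,i,r) : s > 0, i > 0, r ≥ 0, s+i+r ≤ 1} remain in D for all t ≥ 0. -/
/-!
Positivity of `s` and `i` comes from the integrating factor: each satisfies a linear equation
`f' = a(t) f` with `a` continuous, so `f(t) · exp(-∫₀ᵗ a)` is constant and `f` keeps the sign of
`f 0`. Then `r' = γ i ≥ 0` makes `r` nondecreasing, and `s + i + r` is conserved since the three
right-hand sides sum to zero.
-/

open Set Real

lemma eq_of_hasDerivAt_zero_of_le {E : Type*} [NormedAddCommGroup E] [NormedSpace ℝ E]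
    {f : ℝ → E} {a : ℝ} (hf : ∀ t, a ≤ t → HasDerivAt f 0 t) {t : ℝ} (ht : a ≤ t) :
    f t = f a :=
  constant_of_has_deriv_right_zero (fun x hx => (hf x hx.1).continuousAt.continuousWithinAt)
    (fun x hx => (hf x hx.1).hasDerivWithinAt) t ⟨ht, le_rfl⟩

lemma monotoneOn_Ici_of_hasDerivAt_nonneg {f f' : ℝ → ℝ} {a : ℝ}
    (hf : ∀ t, a ≤ t → HasDerivAt f (f' t) t) (hf' : ∀ t, a ≤ t → 0 ≤ f' t) :
    MonotoneOn f (Ici a) := by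
  refine monotoneOn_of_hasDerivWithinAt_nonneg (f' := f') (convex_Ici a)
    (fun x hx => (hf x hx).continuousAt.continuousWithinAt) (fun x hx => ?_) (fun x hx => ?_)
  · rw [interior_Ici] at hx
    exact (hf x hx.le).hasDerivWithinAt
  · rw [interior_Ici] at hx
    exact hf' x hx.le

lemma pos_of_hasDerivAt_eq_mul_self {f a : ℝ → ℝ} (ha : ContinuousOn a (Ici 0))
    (hf : ∀ t, 0 ≤ t → HasDerivAt f (a t * f t) t) (hf0 : 0 < f 0) {t : ℝ} (ht : 0 ≤ t) :
    0 < f t := by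
  -- `a ∘ max · 0` extends `a` continuously to all of `ℝ`, so it has a primitive `A` everywhere.
  set b : ℝ → ℝ := fun x => a (max x 0)
  have hb : Continuous b :=
    ha.comp_continuous (continuous_id.max continuous_const) fun x => le_max_right x 0
  set A : ℝ → ℝ := fun t => ∫ x in (0 : ℝ)..t, b x
  have hA : ∀ t, HasDerivAt A (b t) t := fun t => (hb.integral_hasStrictDerivAt 0 t).hasDerivAt
  have hconst : ∀ t, 0 ≤ t → HasDerivAt (fun u => f u * exp (-A u)) 0 t := by
    intro t ht
    have hbt : b t = a t := congrArg a (max_eq_left ht)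
    refine ((hf t ht).mul (hA t).neg.exp).congr_deriv ?_
    rw [hbt]
    ring
  have hft : f t * exp (-A t) = f 0 * exp (-A 0) := eq_of_hasDerivAt_zero_of_le hconst ht
  have : 0 < f t * exp (-A t) := hft ▸ mul_pos hf0 (exp_pos _)
  exact (mul_pos_iff_of_pos_right (exp_pos _)).mp this

theorem sir_invariant_domain_general
    (β γ : ℝ) (hγ : 0 < γ)
    (s i r : ℝ → ℝ)
    (hs0 : 0 < s 0) (hi0 : 0 < i 0) (hr0 : 0 ≤ r 0)
    (hsum : s 0 + i 0 + r 0 ≤ 1)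
    (hs : ∀ t, 0 ≤ t → HasDerivAt s (-β * s t * i t) t)
    (hi : ∀ t, 0 ≤ t → HasDerivAt i (i t * (β * s t - γ)) t)
    (hr : ∀ t, 0 ≤ t → HasDerivAt r (γ * i t) t) :
    ∀ t, 0 ≤ t → 0 < s t ∧ 0 < i t ∧ 0 ≤ r t ∧ s t + i t + r t ≤ 1 := by
  have hs_cont : ContinuousOn s (Ici 0) := fun t ht => (hs t ht).continuousAt.continuousWithinAt
  have hi_cont : ContinuousOn i (Ici 0) := fun t ht => (hi t ht).continuousAt.continuousWithinAt
  have hs_pos : ∀ t, 0 ≤ t → 0 < s t := fun t =>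
    pos_of_hasDerivAt_eq_mul_self (a := fun u => -β * i u) (continuousOn_const.mul hi_cont)
      (fun u hu => (hs u hu).congr_deriv (by ring)) hs0
  have hi_pos : ∀ t, 0 ≤ t → 0 < i t := fun t =>
    pos_of_hasDerivAt_eq_mul_self (a := fun u => β * s u - γ) ((continuousOn_const.mul hs_cont).sub continuousOn_const)
      (fun u hu => (hi u hu).congr_deriv (by ring)) hi0
  have hr_mono : MonotoneOn r (Ici 0) :=
    monotoneOn_Ici_of_hasDerivAt_nonneg hr fun t ht => mul_nonneg hγ.le (hi_pos t ht).le
  have hsum_const : ∀ t, 0 ≤ t → s t + i t + r t = s 0 + i 0 + r 0 := fun t =>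
    eq_of_hasDerivAt_zero_of_le fun u hu =>
      (((hs u hu).add (hi u hu)).add (hr u hu)).congr_deriv (by ring)
  intro t ht
  exact ⟨hs_pos t ht, hi_pos t ht, hr0.trans (hr_mono self_mem_Ici ht ht),
    (hsum_const t ht).trans_le hsum⟩

/-- Solutions of SIR starting in D = {s>0, i>0, r≥0, s+i+r ≤ 1} remain in D. -/
theorem sir_invariant_domain
    (β γ : ℝ) (hβ : 0 < β) (hγ : 0 < γ)
    (s i r : ℝ → ℝ)
    (hs0 : 0 < s 0) (hi0 : 0 < i 0) (hr0 : 0 ≤ r 0)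
    (hsum : s 0 + i 0 + r 0 ≤ 1)
    (hs : ∀ t, 0 ≤ t → HasDerivAt s (-β * s t * i t) t)
    (hi : ∀ t, 0 ≤ t → HasDerivAt i (i t * (β * s t - γ)) t)
    (hr : ∀ t, 0 ≤ t → HasDerivAt r (γ * i t) t) :
    ∀ t, 0 ≤ t → 0 < s t ∧ 0 < i t ∧ 0 ≤ r t ∧ s t + i t + r t ≤ 1 :=
  sir_invariant_domain_general β γ hγ s i r hs0 hi0 hr0 hsum hs hi hr
end

section
/- For a SIR-PH model with R₀ = α V⁻¹ b > 0, the quantity z(t) = Y(t) + s(t) - (1/R₀) log(s(t)), where Y(t) = (1/R₀) i(t) V⁻¹ b, is constant along solutions with s(t) > 0. -/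
open Matrix

/-
Write `c = V⁻¹ b`, so that `Y = (1/R₀) i ⬝ c`. Since `V c = b` and `α ⬝ c = R₀`, the equation for `i`
gives `(i ⬝ c)' = s (i ⬝ b) R₀ - i ⬝ b`: the removal term `i V` contributes exactly `-(i ⬝ b)`, the
force of infection. Together with `s' = -s (i ⬝ b)` and `(log s)' = -(i ⬝ b)`, the derivative of
`z = Y + s - (1/R₀) log s` vanishes identically, so `z` is constant.
-/

section

variable {𝕜 ι : Type*} [NontriviallyNormedField 𝕜] [Fintype ι]

theorem hasDerivAt_dotProduct_const {x : 𝕜 → ι → 𝕜} {x' : ι → 𝕜} {t : 𝕜} (c : ι → 𝕜)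
    (hx : ∀ k, HasDerivAt (fun u => x u k) (x' k) t) :
    HasDerivAt (fun u => x u ⬝ᵥ c) (x' ⬝ᵥ c) t :=
  HasDerivAt.fun_sum fun k _ => (hx k).mul_const (c k)

theorem vecMul_dotProduct_inv_mulVec [DecidableEq ι] {V : Matrix ι ι 𝕜} (hV : IsUnit V.det)
    (y b : ι → 𝕜) : y ᵥ* V ⬝ᵥ V⁻¹ *ᵥ b = y ⬝ᵥ b := by
  rw [← dotProduct_mulVec, mulVec_mulVec, mul_nonsing_inv V hV, one_mulVec]

theorem hasDerivAt_vecMul_inv_dotProduct [DecidableEq ι] {x : 𝕜 → ι → 𝕜} {α b : ι → 𝕜}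
    {V : Matrix ι ι 𝕜} (hV : IsUnit V.det) {σ t : 𝕜}
    (hx : ∀ k, HasDerivAt (fun u => x u k) (σ * α k - (x t ᵥ* V) k) t) :
    HasDerivAt (fun u => x u ᵥ* V⁻¹ ⬝ᵥ b) (σ * (α ᵥ* V⁻¹ ⬝ᵥ b) - x t ⬝ᵥ b) t := by
  have hdot := hasDerivAt_dotProduct_const (V⁻¹ *ᵥ b) hx
  simp only [← dotProduct_mulVec]
  convert hdot using 1
  rw [← vecMul_dotProduct_inv_mulVec hV (x t) b, ← smul_eq_mul σ, ← smul_dotProduct,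
    ← sub_dotProduct]
  rfl

end

theorem sirph_invariant_general
    (n : ℕ) (s : ℝ → ℝ) (i : ℝ → Fin n → ℝ)
    (α b : Fin n → ℝ) (V : Matrix (Fin n) (Fin n) ℝ)
    (hV : IsUnit V.det)
    (R₀ : ℝ) (hR₀ : R₀ = (Matrix.vecMul α V⁻¹) ⬝ᵥ b) (hR₀pos : 0 < R₀)
    (hspos : ∀ t, 0 < s t)
    (hs : ∀ t, HasDerivAt s (-(s t * (i t ⬝ᵥ b))) t)
    (hi : ∀ t k, HasDerivAt (fun u => i u k)
        (s t * (i t ⬝ᵥ b) * α k - Matrix.vecMul (i t) V k) t) :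
    ∀ t, (1 / R₀) * ((Matrix.vecMul (i t) V⁻¹) ⬝ᵥ b) + s t
          - (1 / R₀) * Real.log (s t)
        = (1 / R₀) * ((Matrix.vecMul (i 0) V⁻¹) ⬝ᵥ b) + s 0
          - (1 / R₀) * Real.log (s 0) := by
  have hz : ∀ t, HasDerivAt (fun u => (1 / R₀) * (i u ᵥ* V⁻¹ ⬝ᵥ b) + s u
      - (1 / R₀) * Real.log (s u)) 0 t := by
    intro t
    have hY := hasDerivAt_vecMul_inv_dotProduct (b := b) hV (hi t)
    have hlog := (hs t).log (hspos t).ne'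
    refine (((hY.const_mul (1 / R₀)).add (hs t)).sub (hlog.const_mul (1 / R₀))).congr_deriv ?_
    rw [← hR₀]
    field_simp [hR₀pos.ne', (hspos t).ne']
    ring
  intro t
  exact is_const_of_deriv_eq_zero (fun u => (hz u).differentiableAt) (fun u => (hz u).deriv) t 0

/-- SIR-PH: z(t) = Y(t) + s(t) - (1/R₀) log s(t) is constant along solutions. -/
theorem sirph_invariant
    (n : ℕ) (s : ℝ → ℝ) (i : ℝ → Fin n → ℝ)
    (α b : Fin n → ℝ) (V : Matrix (Fin n) (Fin n) ℝ)
    (hα : ∀ k, 0 ≤ α k) (hα1 : ∑ k, α k = 1)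
    (hV : IsUnit V.det)
    (R₀ : ℝ) (hR₀ : R₀ = (Matrix.vecMul α V⁻¹) ⬝ᵥ b) (hR₀pos : 0 < R₀)
    (hspos : ∀ t, 0 < s t)
    (hs : ∀ t, HasDerivAt s (-(s t * (i t ⬝ᵥ b))) t)
    (hi : ∀ t k, HasDerivAt (fun u => i u k)
        (s t * (i t ⬝ᵥ b) * α k - Matrix.vecMul (i t) V k) t) :
    ∀ t, (1 / R₀) * ((Matrix.vecMul (i t) V⁻¹) ⬝ᵥ b) + s t
          - (1 / R₀) * Real.log (s t)
        = (1 / R₀) * ((Matrix.vecMul (i 0) V⁻¹) ⬝ᵥ b) + s 0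
          - (1 / R₀) * Real.log (s 0) :=
  sirph_invariant_general n s i α b V hV R₀ hR₀ hR₀pos hspos hs hi
end

section
/- For a SIR-PH model with limits i(∞) = 0 and s(∞) = s_∞, the total integrated infectives I^{(∞)} = ∫₀^∞ i(u) du satisfy I^{(∞)}·V = i₀ + (s₀ - s_∞)·α. -/
/-!
Along the flow, `i_j + α_j s` has derivative `-(i V)_j`, since the infection terms cancel.
Integrating over `(0, ∞)` and using `i → 0`, `s → s_∞` gives `(∫ i) V = i₀ + (s₀ - s_∞) α`
componentwise, the integral commuting with the finite sum in `vecMul`.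
-/

open Matrix Filter MeasureTheory

theorem integral_vecMul_apply {X ι κ : Type*} [MeasurableSpace X] [Fintype ι] {μ : Measure X}
    {x : X → ι → ℝ} (hx : ∀ k, Integrable (fun a => x a k) μ) (V : Matrix ι κ ℝ) (j : κ) :
    ∫ a, vecMul (x a) V j ∂μ = vecMul (fun k => ∫ a, x a k ∂μ) V j := by
  simp only [vecMul, dotProduct]
  rw [integral_finsetSum _ fun k _ => (hx k).mul_const _]
  simp only [integral_mul_const]

theorem integrable_vecMul_apply {X ι κ : Type*} [MeasurableSpace X] [Fintype ι] {μ : Measure X}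
    {x : X → ι → ℝ} (hx : ∀ k, Integrable (fun a => x a k) μ) (V : Matrix ι κ ℝ) (j : κ) :
    Integrable (fun a => vecMul (x a) V j) μ := by
  simp only [vecMul, dotProduct]
  exact integrable_finsetSum _ fun k _ => (hx k).mul_const _

theorem hasDerivAt_infectives_add_mul_susceptibles {ι : Type*} [Fintype ι] {s : ℝ → ℝ}
    {i : ℝ → ι → ℝ} {α b : ι → ℝ} {V : Matrix ι ι ℝ} {t : ℝ} (j : ι)
    (hs : HasDerivAt s (-(s t * (i t ⬝ᵥ b))) t)
    (hi : HasDerivAt (fun u => i u j) (s t * (i t ⬝ᵥ b) * α j - vecMul (i t) V j) t) :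
    HasDerivAt (fun u => i u j + s u * α j) (-vecMul (i t) V j) t :=
  (hi.add (hs.mul_const (α j))).congr_deriv (by ring)

theorem sirph_total_integrated_infectives_general
    (n : ℕ) (s : ℝ → ℝ) (i : ℝ → Fin n → ℝ)
    (α b : Fin n → ℝ) (V : Matrix (Fin n) (Fin n) ℝ)
    (hs : ∀ t, 0 ≤ t → HasDerivAt s (-(s t * (i t ⬝ᵥ b))) t)
    (hi : ∀ t, 0 ≤ t → ∀ k, HasDerivAt (fun u => i u k)
        (s t * (i t ⬝ᵥ b) * α k - Matrix.vecMul (i t) V k) t)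
    (sInf : ℝ)
    (hslim : Tendsto s atTop (nhds sInf))
    (hilim : ∀ k, Tendsto (fun t => i t k) atTop (nhds 0))
    (hint : ∀ k, MeasureTheory.IntegrableOn (fun u => i u k) (Set.Ioi 0)) :
    ∀ j, Matrix.vecMul (fun k => ∫ u in Set.Ioi 0, i u k) V j
        = i 0 j + (s 0 - sInf) * α j := by
  intro j
  have hftc := integral_Ioi_of_hasDerivAt_of_tendsto'
    (fun t ht => hasDerivAt_infectives_add_mul_susceptibles j (hs t ht) (hi t ht j))
    (integrable_vecMul_apply hint V j).neg ((hilim j).add (hslim.mul_const (α j)))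
  rw [integral_neg, integral_vecMul_apply hint] at hftc
  linarith

/-- SIR-PH: total integrated infectives satisfy I^{(∞)}·V = i₀ + (s₀ - s_∞)·α. -/
theorem sirph_total_integrated_infectives
    (n : ℕ) (s : ℝ → ℝ) (i : ℝ → Fin n → ℝ)
    (α b : Fin n → ℝ) (V : Matrix (Fin n) (Fin n) ℝ)
    (hα : ∀ k, 0 ≤ α k) (hα1 : ∑ k, α k = 1)
    (hscont : Continuous s) (hicont : ∀ k, Continuous fun t => i t k)
    (hs : ∀ t, 0 ≤ t → HasDerivAt s (-(s t * (i t ⬝ᵥ b))) t)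
    (hi : ∀ t, 0 ≤ t → ∀ k, HasDerivAt (fun u => i u k)
        (s t * (i t ⬝ᵥ b) * α k - Matrix.vecMul (i t) V k) t)
    (sInf : ℝ)
    (hslim : Tendsto s atTop (nhds sInf))
    (hilim : ∀ k, Tendsto (fun t => i t k) atTop (nhds 0))
    (hint : ∀ k, MeasureTheory.IntegrableOn (fun u => i u k) (Set.Ioi 0)) :
    ∀ j, Matrix.vecMul (fun k => ∫ u in Set.Ioi 0, i u k) V j
        = i 0 j + (s 0 - sInf) * α j :=
  sirph_total_integrated_infectives_general n s i α b V hs hi sInf hslim hilim hint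
end

section
/- For a SIR-PH model with removed classes r'(t) = i(t)·W, where W = V·V⁻¹·W, the final size of the removed classes satisfies r_∞ - r₀ = (i₀ + (s₀ - s_∞)·α)·V⁻¹·W. -/
/-!
Integrate each equation over `(0, ∞)`. Since `s` is bounded and `i` is integrable, the
fundamental theorem of calculus for improper integrals gives `∫ s (i ⬝ᵥ b) = s₀ - s_∞`, then
`I ᵥ* V = i₀ + (s₀ - s_∞) α` for `I = ∫ i` (because `i(∞) = 0`), and `r_∞ - r₀ = I ᵥ* W`.
Inverting `V` in the second identity and substituting into the third gives the final size.
-/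

open Matrix Filter MeasureTheory Set Topology

theorem exists_forall_norm_le_of_continuousOn_Ici_of_tendsto {E : Type*}
    [SeminormedAddCommGroup E] {f : ℝ → E} {a : ℝ} {l : E}
    (hf : ContinuousOn f (Ici a)) (hlim : Tendsto f atTop (𝓝 l)) :
    ∃ C, ∀ t ∈ Ici a, ‖f t‖ ≤ C := by
  obtain ⟨T, hT⟩ := eventually_atTop.1 (hlim.norm.eventually (gt_mem_nhds (lt_add_one ‖l‖)))
  obtain ⟨C, hC⟩ := (isCompact_Icc (a := a) (b := T)).exists_bound_of_continuousOn
    (hf.mono Icc_subset_Ici_self)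
  refine ⟨max C (‖l‖ + 1), fun t ht => ?_⟩
  rcases le_total t T with htT | hTt
  · exact le_max_of_le_left (hC t ⟨ht, htT⟩)
  · exact le_max_of_le_right (hT t hTt).le

section Coordinatewise

variable {X ι : Type*} [MeasurableSpace X] [Fintype ι] {μ : Measure X} {x : X → ι → ℝ}

theorem integrable_dotProduct_const (hx : ∀ k, Integrable (fun t => x t k) μ) (c : ι → ℝ) :
    Integrable (fun t => x t ⬝ᵥ c) μ :=
  integrable_finsetSum _ fun k _ => (hx k).mul_const (c k)

theorem integral_dotProduct_const (hx : ∀ k, Integrable (fun t => x t k) μ) (c : ι → ℝ) :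
    ∫ t, x t ⬝ᵥ c ∂μ = (fun k => ∫ t, x t k ∂μ) ⬝ᵥ c := by
  simp only [dotProduct]
  rw [integral_finsetSum _ fun k _ => (hx k).mul_const (c k)]
  simp only [integral_mul_const]

end Coordinatewise

section FinalSize

variable {ι κ : Type*} [Fintype ι] {a : ℝ}

theorem integrableOn_mul_of_hasDerivAt_neg_mul {s g : ℝ → ℝ} {sInf : ℝ}
    (hs : ∀ t, a ≤ t → HasDerivAt s (-(s t * g t)) t) (hg : IntegrableOn g (Ioi a))
    (hslim : Tendsto s atTop (𝓝 sInf)) :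
    IntegrableOn (fun t => s t * g t) (Ioi a) := by
  have hcont : ContinuousOn s (Ici a) := fun t ht => (hs t ht).continuousAt.continuousWithinAt
  obtain ⟨C, hC⟩ := exists_forall_norm_le_of_continuousOn_Ici_of_tendsto hcont hslim
  refine hg.bdd_mul (c := C) ((hcont.mono Ioi_subset_Ici_self).aestronglyMeasurable measurableSet_Ioi) ?_
  filter_upwards [ae_restrict_mem measurableSet_Ioi] with t ht
  exact hC t (mem_Ici_of_Ioi ht)

theorem integral_mul_of_hasDerivAt_neg_mul {s g : ℝ → ℝ} {sInf : ℝ}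
    (hs : ∀ t, a ≤ t → HasDerivAt s (-(s t * g t)) t) (hg : IntegrableOn g (Ioi a))
    (hslim : Tendsto s atTop (𝓝 sInf)) :
    ∫ t in Ioi a, s t * g t = s a - sInf := by
  have h := integral_Ioi_of_hasDerivAt_of_tendsto' hs
    (integrableOn_mul_of_hasDerivAt_neg_mul hs hg hslim).neg hslim
  rw [integral_neg] at h
  linarith

theorem vecMul_integral_of_hasDerivAt_sub_vecMul {i : ℝ → ι → ℝ} {f : ℝ → ℝ} {α : ι → ℝ}
    {V : Matrix ι ι ℝ}
    (hi : ∀ t, a ≤ t → ∀ k, HasDerivAt (fun u => i u k) (f t * α k - (i t ᵥ* V) k) t)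
    (hint : ∀ k, IntegrableOn (fun t => i t k) (Ioi a)) (hf : IntegrableOn f (Ioi a))
    (hilim : ∀ k, Tendsto (fun t => i t k) atTop (𝓝 0)) :
    (fun k => ∫ t in Ioi a, i t k) ᵥ* V = fun k => i a k + (∫ t in Ioi a, f t) * α k := by
  funext k
  have hiV : IntegrableOn (fun t => (i t ᵥ* V) k) (Ioi a) :=
    integrable_dotProduct_const hint _
  have h := integral_Ioi_of_hasDerivAt_of_tendsto' (fun t ht => hi t ht k)
    ((hf.mul_const _).sub hiV) (hilim k)
  rw [integral_sub (hf.mul_const _) hiV, integral_mul_const] at h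
  have hiV_integral : ∫ t in Ioi a, (i t ᵥ* V) k = ((fun k => ∫ t in Ioi a, i t k) ᵥ* V) k :=
    integral_dotProduct_const hint _
  linarith

theorem sub_eq_vecMul_integral_of_hasDerivAt_vecMul {i : ℝ → ι → ℝ} {r : ℝ → κ → ℝ}
    {W : Matrix ι κ ℝ} {rInf : κ → ℝ}
    (hr : ∀ t, a ≤ t → ∀ j, HasDerivAt (fun u => r u j) ((i t ᵥ* W) j) t)
    (hint : ∀ k, IntegrableOn (fun t => i t k) (Ioi a))
    (hrlim : ∀ j, Tendsto (fun t => r t j) atTop (𝓝 (rInf j))) (j : κ) :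
    rInf j - r a j = ((fun k => ∫ t in Ioi a, i t k) ᵥ* W) j := by
  rw [← integral_Ioi_of_hasDerivAt_of_tendsto' (fun t ht => hr t ht j)
    (integrable_dotProduct_const hint _) (hrlim j)]
  exact integral_dotProduct_const hint _

end FinalSize

theorem sirph_removed_final_size_general
    (n p : ℕ) (s : ℝ → ℝ) (i : ℝ → Fin n → ℝ) (r : ℝ → Fin p → ℝ)
    (α b : Fin n → ℝ) (V : Matrix (Fin n) (Fin n) ℝ)
    (W : Matrix (Fin n) (Fin p) ℝ)
    (hV : IsUnit V.det)
    (hs : ∀ t, 0 ≤ t → HasDerivAt s (-(s t * (i t ⬝ᵥ b))) t)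
    (hi : ∀ t, 0 ≤ t → ∀ k, HasDerivAt (fun u => i u k)
        (s t * (i t ⬝ᵥ b) * α k - Matrix.vecMul (i t) V k) t)
    (hr : ∀ t, 0 ≤ t → ∀ j, HasDerivAt (fun u => r u j)
        (Matrix.vecMul (i t) W j) t)
    (sInf : ℝ) (rInf : Fin p → ℝ)
    (hslim : Tendsto s atTop (nhds sInf))
    (hilim : ∀ k, Tendsto (fun t => i t k) atTop (nhds 0))
    (hrlim : ∀ j, Tendsto (fun t => r t j) atTop (nhds (rInf j)))
    (hint : ∀ k, MeasureTheory.IntegrableOn (fun u => i u k) (Set.Ioi 0)) :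
    ∀ j, rInf j - r 0 j
        = Matrix.vecMul
            (Matrix.vecMul (fun k => i 0 k + (s 0 - sInf) * α k) V⁻¹) W j := by
  set I : Fin n → ℝ := fun k => ∫ t in Ioi 0, i t k
  have hib : IntegrableOn (fun t => i t ⬝ᵥ b) (Ioi 0) := integrable_dotProduct_const hint b
  have hIV : I ᵥ* V = fun k => i 0 k + (s 0 - sInf) * α k := by
    rw [vecMul_integral_of_hasDerivAt_sub_vecMul hi hint
      (integrableOn_mul_of_hasDerivAt_neg_mul hs hib hslim) hilim,
      integral_mul_of_hasDerivAt_neg_mul hs hib hslim]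
  intro j
  rw [← hIV, vecMul_vecMul I V, mul_nonsing_inv V hV, vecMul_one]
  exact sub_eq_vecMul_integral_of_hasDerivAt_vecMul hr hint hrlim j

/-- SIR-PH: final size of removed classes:
r_∞ - r₀ = (i₀ + (s₀ - s_∞)·α)·V⁻¹·W. -/
theorem sirph_removed_final_size
    (n p : ℕ) (s : ℝ → ℝ) (i : ℝ → Fin n → ℝ) (r : ℝ → Fin p → ℝ)
    (α b : Fin n → ℝ) (V : Matrix (Fin n) (Fin n) ℝ)
    (W : Matrix (Fin n) (Fin p) ℝ)
    (hα : ∀ k, 0 ≤ α k) (hα1 : ∑ k, α k = 1)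
    (hV : IsUnit V.det)
    (hscont : Continuous s) (hicont : ∀ k, Continuous fun t => i t k)
    (hs : ∀ t, 0 ≤ t → HasDerivAt s (-(s t * (i t ⬝ᵥ b))) t)
    (hi : ∀ t, 0 ≤ t → ∀ k, HasDerivAt (fun u => i u k)
        (s t * (i t ⬝ᵥ b) * α k - Matrix.vecMul (i t) V k) t)
    (hr : ∀ t, 0 ≤ t → ∀ j, HasDerivAt (fun u => r u j)
        (Matrix.vecMul (i t) W j) t)
    (sInf : ℝ) (rInf : Fin p → ℝ)
    (hslim : Tendsto s atTop (nhds sInf))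
    (hilim : ∀ k, Tendsto (fun t => i t k) atTop (nhds 0))
    (hrlim : ∀ j, Tendsto (fun t => r t j) atTop (nhds (rInf j)))
    (hint : ∀ k, MeasureTheory.IntegrableOn (fun u => i u k) (Set.Ioi 0)) :
    ∀ j, rInf j - r 0 j
        = Matrix.vecMul
            (Matrix.vecMul (fun k => i 0 k + (s 0 - sInf) * α k) V⁻¹) W j :=
  sirph_removed_final_size_general n p s i r α b V W hV hs hi hr sInf rInf hslim hilim hrlim hint
end

section
/- For a SIR-PH model with R₀ = α V⁻¹ b > 1, s₀ R₀ > 1, and Y₀ = (1/R₀) i₀ V⁻¹ b, the maximal value of Y along a trajectory that reaches s = 1/R₀ equals Y₀ + s₀ - (1 + log(s₀ R₀))/R₀. -/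
/-!
Along the flow, `Y + s - (log s) / R₀` is conserved, since `Y' = (s - 1/R₀)(i·b)` and
`s' = -s (i·b)`. Hence `Y = const - (s - (log s) / R₀)`, and `x ↦ x - (log x) / R₀` attains its
minimum over `x > 0` at `x = 1/R₀` (this is `log y ≤ y - 1` with `y = x R₀`).
-/

open Matrix

theorem HasDerivAt.dotProduct_const {ι : Type*} [Fintype ι] {x : ℝ → ι → ℝ} {x' w : ι → ℝ}
    {t : ℝ} (hx : ∀ k, HasDerivAt (fun u => x u k) (x' k) t) :
    HasDerivAt (fun u => x u ⬝ᵥ w) (x' ⬝ᵥ w) t :=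
  HasDerivAt.fun_sum fun k _ => (hx k).mul_const (w k)

theorem vecMul_dotProduct_nonsing_inv_mulVec {ι : Type*} [Fintype ι] [DecidableEq ι]
    {V : Matrix ι ι ℝ} (hV : IsUnit V.det) (x b : ι → ℝ) :
    vecMul x V ⬝ᵥ (V⁻¹ *ᵥ b) = x ⬝ᵥ b := by
  rw [← dotProduct_mulVec, mulVec_mulVec, mul_nonsing_inv V hV, one_mulVec]

theorem hasDerivAt_vecMul_nonsing_inv_dotProduct {ι : Type*} [Fintype ι] [DecidableEq ι]
    {V : Matrix ι ι ℝ} (hV : IsUnit V.det) {x : ℝ → ι → ℝ} {α b : ι → ℝ} {σ t : ℝ}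
    (hx : ∀ k, HasDerivAt (fun u => x u k) (σ * α k - vecMul (x t) V k) t) :
    HasDerivAt (fun u => vecMul (x u) V⁻¹ ⬝ᵥ b) (σ * (vecMul α V⁻¹ ⬝ᵥ b) - x t ⬝ᵥ b) t := by
  simp_rw [← dotProduct_mulVec]
  refine (HasDerivAt.dotProduct_const (x' := σ • α - vecMul (x t) V) hx).congr_deriv ?_
  rw [sub_dotProduct, smul_dotProduct, vecMul_dotProduct_nonsing_inv_mulVec hV, smul_eq_mul]

theorem hasDerivAt_add_sub_log_div_eq_zero {Y s : ℝ → ℝ} {R f t : ℝ} (hst : s t ≠ 0)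
    (hY : HasDerivAt Y ((s t - 1 / R) * f) t) (hs : HasDerivAt s (-(s t * f)) t) :
    HasDerivAt (fun u => Y u + s u - Real.log (s u) / R) 0 t := by
  refine ((hY.add hs).sub ((hs.log hst).div_const R)).congr_deriv ?_
  field_simp
  ring

theorem eq_of_hasDerivAt_zero_of_nonneg {f : ℝ → ℝ} (hf : ∀ t, 0 ≤ t → HasDerivAt f 0 t)
    {t : ℝ} (ht : 0 ≤ t) : f t = f 0 := by
  have h := (convex_Ici (0 : ℝ)).norm_image_sub_le_of_norm_hasDerivWithin_le (C := 0)
    (fun u hu => (hf u hu).hasDerivWithinAt) (fun _ _ => by simp) Set.self_mem_Ici ht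
  simpa [sub_eq_zero] using h

theorem log_div_sub_le {x R : ℝ} (hx : 0 < x) (hR : 0 < R) :
    Real.log x / R - x ≤ -(1 + Real.log R) / R := by
  have h := Real.log_le_sub_one_of_pos (mul_pos hx hR)
  rw [Real.log_mul hx.ne' hR.ne'] at h
  rw [div_sub' hR.ne', div_le_div_iff_of_pos_right hR]
  linarith

theorem log_div_sub_inv_eq (R : ℝ) :
    Real.log (1 / R) / R - 1 / R = -(1 + Real.log R) / R := by
  rw [one_div, Real.log_inv]
  ring

theorem sirph_Ymax_general
    (n : ℕ) (s : ℝ → ℝ) (i : ℝ → Fin n → ℝ)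
    (α b : Fin n → ℝ) (V : Matrix (Fin n) (Fin n) ℝ)
    (hV : IsUnit V.det)
    (R₀ : ℝ) (hR₀ : R₀ = (Matrix.vecMul α V⁻¹) ⬝ᵥ b) (hR₀gt : 1 < R₀)
    (hspos : ∀ t, 0 ≤ t → 0 < s t)
    (hs : ∀ t, 0 ≤ t → HasDerivAt s (-(s t * (i t ⬝ᵥ b))) t)
    (hi : ∀ t, 0 ≤ t → ∀ k, HasDerivAt (fun u => i u k)
        (s t * (i t ⬝ᵥ b) * α k - Matrix.vecMul (i t) V k) t)
    (Y : ℝ → ℝ) (hY : ∀ t, Y t = (1 / R₀) * ((Matrix.vecMul (i t) V⁻¹) ⬝ᵥ b))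
    (tstar : ℝ) (htstar : 0 ≤ tstar) (hstar : s tstar = 1 / R₀) :
    (∀ t, 0 ≤ t → Y t ≤ Y 0 + s 0 - (1 + Real.log (s 0 * R₀)) / R₀) ∧
      Y tstar = Y 0 + s 0 - (1 + Real.log (s 0 * R₀)) / R₀ := by
  have hR₀pos : 0 < R₀ := zero_lt_one.trans hR₀gt
  have hYd : ∀ t, 0 ≤ t → HasDerivAt Y ((s t - 1 / R₀) * (i t ⬝ᵥ b)) t := fun t ht => by
    rw [funext hY]
    refine ((hasDerivAt_vecMul_nonsing_inv_dotProduct hV (hi t ht)).const_mul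
      (1 / R₀)).congr_deriv ?_
    rw [← hR₀]
    field_simp
  have hconserved : ∀ t, 0 ≤ t →
      Y t = Y 0 + s 0 - Real.log (s 0) / R₀ + (Real.log (s t) / R₀ - s t) := fun t ht => by
    have := eq_of_hasDerivAt_zero_of_nonneg (fun u hu =>
      hasDerivAt_add_sub_log_div_eq_zero (hspos u hu).ne' (hYd u hu) (hs u hu)) ht
    linarith
  have htarget : Y 0 + s 0 - (1 + Real.log (s 0 * R₀)) / R₀ =
      Y 0 + s 0 - Real.log (s 0) / R₀ + -(1 + Real.log R₀) / R₀ := by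
    rw [Real.log_mul (hspos 0 le_rfl).ne' hR₀pos.ne']
    ring
  refine ⟨fun t ht => ?_, ?_⟩
  · rw [htarget, hconserved t ht]
    gcongr
    exact log_div_sub_le (hspos t ht) hR₀pos
  · rw [htarget, hconserved tstar htstar, hstar, log_div_sub_inv_eq R₀]

/-- SIR-PH: with R₀ > 1, s₀R₀ > 1, the maximal value of Y along a trajectory
reaching s = 1/R₀ equals Y₀ + s₀ - (1 + log(s₀R₀))/R₀. -/
theorem sirph_Ymax
    (n : ℕ) (s : ℝ → ℝ) (i : ℝ → Fin n → ℝ)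
    (α b : Fin n → ℝ) (V : Matrix (Fin n) (Fin n) ℝ)
    (hα : ∀ k, 0 ≤ α k) (hα1 : ∑ k, α k = 1)
    (hV : IsUnit V.det)
    (R₀ : ℝ) (hR₀ : R₀ = (Matrix.vecMul α V⁻¹) ⬝ᵥ b) (hR₀gt : 1 < R₀)
    (hs₀R₀ : 1 < s 0 * R₀)
    (hspos : ∀ t, 0 ≤ t → 0 < s t)
    (hs : ∀ t, 0 ≤ t → HasDerivAt s (-(s t * (i t ⬝ᵥ b))) t)
    (hi : ∀ t, 0 ≤ t → ∀ k, HasDerivAt (fun u => i u k)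
        (s t * (i t ⬝ᵥ b) * α k - Matrix.vecMul (i t) V k) t)
    (Y : ℝ → ℝ) (hY : ∀ t, Y t = (1 / R₀) * ((Matrix.vecMul (i t) V⁻¹) ⬝ᵥ b))
    (tstar : ℝ) (htstar : 0 ≤ tstar) (hstar : s tstar = 1 / R₀) :
    (∀ t, 0 ≤ t → Y t ≤ Y 0 + s 0 - (1 + Real.log (s 0 * R₀)) / R₀) ∧
      Y tstar = Y 0 + s 0 - (1 + Real.log (s 0 * R₀)) / R₀ :=
  sirph_Ymax_general n s i α b V hV R₀ hR₀ hR₀gt hspos hs hi Y hY tstar htstar hstar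
end

section
/- For the SIRV model s' = -s(β i + γ_s), i' = i(β s - γ_i), the quantity μ(t) = β(s(t) + i(t)) - γ_i log(s(t)) + γ_s log(i(t)) is constant along solutions with s, i > 0. -/
/-!
Along a solution, `(log s)' = -(β i + γ_s)` and `(log i)' = β s - γ_i`, so
`μ' = β (s' + i') + γ_i (β i + γ_s) + γ_s (β s - γ_i)`, in which the terms cancel in pairs.
-/

open Real

noncomputable def sirvInvariant (β γs γi s i : ℝ) : ℝ :=
  β * (s + i) - γi * log s + γs * log i

theorem hasDerivAt_sirvInvariant_comp (β γs γi : ℝ) {s i : ℝ → ℝ} {s' i' t : ℝ}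
    (hs : HasDerivAt s s' t) (hi : HasDerivAt i i' t) (hs0 : s t ≠ 0) (hi0 : i t ≠ 0) :
    HasDerivAt (fun t => sirvInvariant β γs γi (s t) (i t))
      (β * (s' + i') - γi * (s' / s t) + γs * (i' / i t)) t :=
  (((hs.add hi).const_mul β).sub ((hs.log hs0).const_mul γi)).add ((hi.log hi0).const_mul γs)

theorem hasDerivAt_sirvInvariant_of_sirv (β γs γi : ℝ) {s i : ℝ → ℝ} {t : ℝ}
    (hs0 : s t ≠ 0) (hi0 : i t ≠ 0)
    (hs : HasDerivAt s (-(s t * (β * i t + γs))) t)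
    (hi : HasDerivAt i (i t * (β * s t - γi)) t) :
    HasDerivAt (fun t => sirvInvariant β γs γi (s t) (i t)) 0 t := by
  convert hasDerivAt_sirvInvariant_comp β γs γi hs hi hs0 hi0 using 1
  field_simp
  ring

theorem sirv_invariant_general
    (β γs γi : ℝ)
    (s i : ℝ → ℝ)
    (hspos : ∀ t, 0 < s t) (hipos : ∀ t, 0 < i t)
    (hs : ∀ t, HasDerivAt s (-(s t * (β * i t + γs))) t)
    (hi : ∀ t, HasDerivAt i (i t * (β * s t - γi)) t) :
    ∀ t, β * (s t + i t) - γi * Real.log (s t) + γs * Real.log (i t)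
        = β * (s 0 + i 0) - γi * Real.log (s 0) + γs * Real.log (i 0) := by
  have hμ (t : ℝ) : HasDerivAt (fun t => sirvInvariant β γs γi (s t) (i t)) 0 t :=
    hasDerivAt_sirvInvariant_of_sirv β γs γi (hspos t).ne' (hipos t).ne' (hs t) (hi t)
  exact fun t => is_const_of_deriv_eq_zero (fun x => (hμ x).differentiableAt)
    (fun x => (hμ x).deriv) t 0

/-- SIRV: μ(t) = β(s+i) - γ_i log s + γ_s log i is constant along solutions. -/
theorem sirv_invariant
    (β γs γi : ℝ) (hβ : 0 < β) (hγs : 0 < γs) (hγi : 0 < γi)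
    (s i : ℝ → ℝ)
    (hspos : ∀ t, 0 < s t) (hipos : ∀ t, 0 < i t)
    (hs : ∀ t, HasDerivAt s (-(s t * (β * i t + γs))) t)
    (hi : ∀ t, HasDerivAt i (i t * (β * s t - γi)) t) :
    ∀ t, β * (s t + i t) - γi * Real.log (s t) + γs * Real.log (i t)
        = β * (s 0 + i 0) - γi * Real.log (s 0) + γs * Real.log (i 0) :=
  sirv_invariant_general β γs γi s i hspos hipos hs hi
end

section
/- For the multi-group SYR model, the effective contact rate a(t) = (Σ_k β_k s_k(t)) / (Σ_k s_k(t)) is non-increasing in t along solutions with all s_k(t) > 0 and y(t) ≥ 0. -/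
/-!
Along `s_k' = -β_k y s_k` the weights `s_k` are depleted fastest where `β_k` is largest, so their
`s`-weighted mean of `β` drifts down: its derivative is `-y` times the `s`-weighted variance of `β`,
which is nonnegative by the Cauchy–Schwarz inequality `(∑ β s)² ≤ (∑ s)(∑ β² s)`.
-/

open Finset

section WeightedMean

variable {ι : Type*} [Fintype ι]

noncomputable def weightedMean (β w : ι → ℝ) : ℝ :=
  (∑ k, β k * w k) / ∑ k, w k

noncomputable def weightedVariance (β w : ι → ℝ) : ℝ :=
  (∑ k, β k ^ 2 * w k) / (∑ k, w k) - weightedMean β w ^ 2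

theorem weightedVariance_nonneg (β : ι → ℝ) {w : ι → ℝ} (hw : ∀ k, 0 ≤ w k) :
    0 ≤ weightedVariance β w := by
  rcases (sum_nonneg fun k _ => hw k : 0 ≤ ∑ k, w k).eq_or_lt with hW | hW
  · simp [weightedVariance, weightedMean, ← hW]
  have cauchySchwarz : (∑ k, β k * w k) ^ 2 ≤ (∑ k, w k) * ∑ k, β k ^ 2 * w k :=
    sum_sq_le_sum_mul_sum_of_sq_le_mul univ (fun k _ => hw k)
      (fun k _ => mul_nonneg (sq_nonneg _) (hw k)) fun k _ => (by ring : _ = _).le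
  rw [weightedVariance, weightedMean, sub_nonneg, div_pow, div_le_div_iff₀ (pow_pos hW 2) hW]
  calc (∑ k, β k * w k) ^ 2 * ∑ k, w k
      ≤ ((∑ k, w k) * ∑ k, β k ^ 2 * w k) * ∑ k, w k := by gcongr
    _ = (∑ k, β k ^ 2 * w k) * (∑ k, w k) ^ 2 := by ring

theorem hasDerivAt_weightedMean (β : ι → ℝ) {s : ℝ → ι → ℝ} {y t : ℝ}
    (hS : ∑ k, s t k ≠ 0) (hs : ∀ k, HasDerivAt (fun u => s u k) (-(β k * s t k * y)) t) :
    HasDerivAt (fun u => weightedMean β (s u)) (-(y * weightedVariance β (s t))) t := by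
  have hB := HasDerivAt.fun_sum fun k (_ : k ∈ univ) => (hs k).const_mul (β k)
  have hW := HasDerivAt.fun_sum fun k (_ : k ∈ univ) => hs k
  refine (hB.div hW hS).congr_deriv ?_
  simp only [weightedVariance, weightedMean, mul_neg, sum_neg_distrib]
  field_simp
  simp only [← sum_mul, mul_assoc y, ← mul_sum]
  ring

end WeightedMean

theorem multigroup_contact_rate_antitone_general
    (m : ℕ) (β : Fin m → ℝ)
    (s : ℝ → Fin m → ℝ) (y : ℝ → ℝ)
    (hy : ∀ t, 0 ≤ t → 0 ≤ y t)
    (hspos : ∀ t, 0 ≤ t → ∀ k, 0 < s t k)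
    (hs : ∀ t, 0 ≤ t → ∀ k,
        HasDerivAt (fun u => s u k) (-(β k * s t k * y t)) t) :
    AntitoneOn (fun t => (∑ k, β k * s t k) / (∑ k, s t k)) (Set.Ici 0) := by
  cases isEmpty_or_nonempty (Fin m)
  · simp only [univ_eq_empty, sum_empty, div_zero]
    exact antitoneOn_const
  have hderiv (t : ℝ) (ht : 0 ≤ t) :
      HasDerivAt (fun u => weightedMean β (s u)) (-(y t * weightedVariance β (s t))) t :=
    hasDerivAt_weightedMean β (sum_pos (fun k _ => hspos t ht k) univ_nonempty).ne' (hs t ht)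
  refine antitoneOn_of_hasDerivWithinAt_nonpos (convex_Ici 0)
    (fun t ht => (hderiv t ht).continuousAt.continuousWithinAt)
    (fun t ht => (hderiv t (interior_subset ht)).hasDerivWithinAt) fun t ht => ?_
  have ht : 0 ≤ t := interior_subset ht
  exact neg_nonpos.2 (mul_nonneg (hy t ht) (weightedVariance_nonneg β fun k => (hspos t ht k).le))

/-- Multi-group SYR: the effective contact rate
a(t) = (Σ β_k s_k(t)) / (Σ s_k(t)) is non-increasing. -/
theorem multigroup_contact_rate_antitone
    (m : ℕ) (β : Fin m → ℝ) (hβ : ∀ k, 0 < β k)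
    (s : ℝ → Fin m → ℝ) (y : ℝ → ℝ)
    (hy : ∀ t, 0 ≤ t → 0 ≤ y t)
    (hspos : ∀ t, 0 ≤ t → ∀ k, 0 < s t k)
    (hs : ∀ t, 0 ≤ t → ∀ k,
        HasDerivAt (fun u => s u k) (-(β k * s t k * y t)) t) :
    AntitoneOn (fun t => (∑ k, β k * s t k) / (∑ k, s t k)) (Set.Ici 0) :=
  multigroup_contact_rate_antitone_general m β s y hy hspos hs
end
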